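/- arXiv:2509.11929 — 10 statements merged into one kernel-verified Lean document; each statement's English description precedes it below -/
import Mathlib

section
/- Let X be a finite type and λ : Set X → ℝ≥0 a non-negative weight function on subsets of X, and define the multi-attribute diversity v_λ(S) = Σ_{A ⊆ X, A ∩ S ≠ ∅} λ(A) for S ⊆ X. Then there exist a measurable space (Ω, 𝒮), a measure μ on Ω, and a function β : X → Set Ω with each β(x) measurable, such that for every nonempty S ⊆ X: μ(⋃_{x∈S} β(x)) = v_λ(S). -/
open MeasureTheory

/- **Statement 3.** Every multi-attribute diversity function
`v_λ(S) = Σ_{A ⊆ X, A ∩ S ≠ ∅} λ(A)` over a finite universe `X` is a volume-based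
diversity function: there is a volume assignment `(Ω, 𝒮, μ, β)` with
`μ(⋃ x ∈ S, β x) = v_λ(S)` for every nonempty `S ⊆ X`. -/
open Classical in
theorem multiattribute_is_volume_based {X : Type} [Fintype X] (lam : Set X → NNReal) :
    ∃ (Ω : Type) (m : MeasurableSpace Ω) (μ : @Measure Ω m) (β : X → Set Ω),
      (∀ x : X, MeasurableSet[m] (β x)) ∧
      ∀ S : Set X, S.Nonempty →
        μ (⋃ x ∈ S, β x) = ∑ A : Set X, if (A ∩ S).Nonempty then (lam A : ENNReal) else 0 := by
  refine ⟨Set X, ⊤, ∑ A : Set X, (lam A : ENNReal) • @Measure.dirac (Set X) ⊤ A,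
    fun x => {A | x ∈ A}, fun x => trivial, fun S hS => ?_⟩
  rw [Measure.finset_sum_apply]
  refine Finset.sum_congr rfl fun A _ => ?_
  rw [Measure.smul_apply, @Measure.dirac_apply' _ ⊤ _ _ trivial]
  have : A ∈ (⋃ x ∈ S, {B : Set X | x ∈ B}) ↔ (A ∩ S).Nonempty := by
    simp [Set.mem_iUnion, Set.Nonempty, Set.mem_inter_iff, and_comm]
  by_cases h : (A ∩ S).Nonempty <;>
    simp [Set.indicator_apply, this, h]
end

section
/- Let X be a finite type, (Ω, 𝒮) a measurable space, μ a measure on Ω, and β : X → Set Ω with each β(x) measurable. For each A ⊆ X define λ_A = μ((⋂_{a∈A} β(a)) ∖ (⋃_{x∈X∖A} β(x))). Then for every nonempty S ⊆ X: μ(⋃_{s∈S} β(s)) = Σ_{A ⊆ X, A ∩ S ≠ ∅} λ_A. -/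
open MeasureTheory

/- **Statement 4.** Every volume-based diversity function over a finite universe `X` is a
multi-attribute diversity function: with `λ_A = μ((⋂ a ∈ A, β a) ∖ ⋃ x ∈ Aᶜ, β x)`,
for every nonempty `S ⊆ X` we have `μ(⋃ s ∈ S, β s) = Σ_{A ⊆ X, A ∩ S ≠ ∅} λ_A`. -/
open Classical in
theorem volume_based_is_multiattribute {X : Type*} [Fintype X] {Ω : Type*} [MeasurableSpace Ω]
    (μ : Measure Ω) (β : X → Set Ω) (hβ : ∀ x : X, MeasurableSet (β x))
    (S : Set X) (hS : S.Nonempty) :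
    μ (⋃ s ∈ S, β s) =
      ∑ A : Set X,
        if (A ∩ S).Nonempty then μ ((⋂ a ∈ A, β a) \ ⋃ x ∈ (Aᶜ : Set X), β x) else 0 := by
  set cell : Set X → Set Ω := fun A => (⋂ a ∈ A, β a) \ ⋃ x ∈ (Aᶜ : Set X), β x with hcell
  have mem_cell : ∀ (A : Set X) (ω : Ω), ω ∈ cell A ↔ ∀ x, (ω ∈ β x ↔ x ∈ A) := by
    intro A ω
    simp only [hcell, Set.mem_diff, Set.mem_iUnion, Set.mem_iInter, not_exists,
      Set.mem_compl_iff]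
    constructor
    · rintro ⟨h1, h2⟩ x
      constructor
      · intro hx
        by_contra hxA
        exact h2 x hxA hx
      · exact h1 x
    · intro h
      exact ⟨fun x hx => (h x).2 hx, fun x hx hωx => hx ((h x).1 hωx)⟩
  have key : (⋃ s ∈ S, β s) =
      ⋃ A ∈ Finset.univ.filter (fun A : Set X => (A ∩ S).Nonempty), cell A := by
    ext ω
    simp only [Set.mem_iUnion, Finset.mem_filter, Finset.mem_univ, true_and]
    constructor
    · rintro ⟨s, hs, hωs⟩
      refine ⟨{x | ω ∈ β x}, ⟨s, hωs, hs⟩, ?_⟩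
      rw [mem_cell]; intro x; rfl
    · rintro ⟨A, ⟨a, haA, haS⟩, hω⟩
      exact ⟨a, haS, ((mem_cell A ω).1 hω a).2 haA⟩
  rw [key, measure_biUnion_finset, Finset.sum_filter]
  · intro A _ B _ hAB
    simp only [Function.onFun, Set.disjoint_left]
    intro ω hωA hωB
    apply hAB
    ext x
    rw [← (mem_cell A ω).1 hωA x, (mem_cell B ω).1 hωB x]
  · intro A _
    exact ((MeasurableSet.biInter (Set.to_countable _) fun a _ => hβ a).diff
      (MeasurableSet.biUnion (Set.to_countable _) fun x _ => hβ x))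
end

section
/- There exist a metric space (X, d), finite subsets S₁ ⊆ S₂ ⊆ X with |S₁| ≥ 2, and an element a ∈ X such that δ_min(S₁ ∪ {a}) − δ_min(S₁) < δ_min(S₂ ∪ {a}) − δ_min(S₂); that is, the min-aggregated distance-based diversity function δ_min is not submodular. -/
noncomputable def deltaMin {X : Type*} (d : X → X → ℝ) (S : Set X) : ℝ :=
  sInf {r : ℝ | ∃ x ∈ S, ∃ y ∈ S, x ≠ y ∧ r = d x y}

theorem deltaMin_not_submodular :
    ∃ (X : Type) (d : X → X → ℝ),
      (∀ x y, 0 ≤ d x y) ∧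
      (∀ x y, d x y = 0 ↔ x = y) ∧
      (∀ x y, d x y = d y x) ∧
      (∀ x y z, d x z ≤ d x y + d y z) ∧
      ∃ (S₁ S₂ : Set X) (a : X), S₁ ⊆ S₂ ∧ S₁.Finite ∧ S₂.Finite ∧ 2 ≤ S₁.ncard ∧
        deltaMin d (S₁ ∪ {a}) - deltaMin d S₁ < deltaMin d (S₂ ∪ {a}) - deltaMin d S₂ := by
  refine ⟨ℝ, fun x y => |x - y|, fun x y => abs_nonneg _,
    fun x y => by rw [abs_eq_zero, sub_eq_zero],
    fun x y => abs_sub_comm x y,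
    fun x y z => abs_sub_le x y z,
    {0, 3}, {0, 3, 4}, 1, by intro x hx; simp at hx ⊢; tauto,
    (Set.toFinite _),
    (Set.toFinite _), ?_, ?_⟩
  · rw [Set.ncard_pair (by norm_num)]
  · have h1 : deltaMin (fun x y => |x - y|) ({0, 3} : Set ℝ) = 3 := by
      apply IsLeast.csInf_eq
      constructor
      · exact ⟨0, by simp, 3, by simp, by norm_num, by norm_num⟩
      · rintro r ⟨x, hx, y, hy, hxy, rfl⟩
        simp at hx hy
        rcases hx with rfl | rfl <;> rcases hy with rfl | rfl <;> simp_all <;> norm_num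
    have h2 : deltaMin (fun x y => |x - y|) (({0, 3} : Set ℝ) ∪ {1}) = 1 := by
      apply IsLeast.csInf_eq
      constructor
      · exact ⟨0, by simp, 1, by simp, by norm_num, by norm_num⟩
      · rintro r ⟨x, hx, y, hy, hxy, rfl⟩
        simp at hx hy
        rcases hx with rfl | rfl | rfl <;> rcases hy with rfl | rfl | rfl <;> simp_all <;> norm_num
    have h3 : deltaMin (fun x y => |x - y|) ({0, 3, 4} : Set ℝ) = 1 := by
      apply IsLeast.csInf_eq
      constructor
      · exact ⟨3, by simp, 4, by simp, by norm_num, by norm_num⟩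
      · rintro r ⟨x, hx, y, hy, hxy, rfl⟩
        simp at hx hy
        rcases hx with rfl | rfl | rfl <;> rcases hy with rfl | rfl | rfl <;> simp_all <;> norm_num
    have h4 : deltaMin (fun x y => |x - y|) (({0, 3, 4} : Set ℝ) ∪ {1}) = 1 := by
      apply IsLeast.csInf_eq
      constructor
      · exact ⟨3, by simp, 4, by simp, by norm_num, by norm_num⟩
      · rintro r ⟨x, hx, y, hy, hxy, rfl⟩
        simp at hx hy
        rcases hx with rfl | rfl | rfl | rfl <;> rcases hy with rfl | rfl | rfl | rfl <;> simp_all <;> norm_num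
    rw [h1, h2, h3, h4]
    norm_num
end

section
/- Let α be an infinite type (the data values) and consider triples T = α × α × α. Define nelem(S), for a finite set S of triples, as the number of distinct values of α occurring as a coordinate of some triple in S. Then for every pseudo-metric d on T (non-negative, symmetric, d(t,t) = 0, satisfying the triangle inequality) that is oblivious to data values — i.e., for every bijection f : α ≃ α and all triples t, t', d((f(t₁),f(t₂),f(t₃)), (f(t'₁),f(t'₂),f(t'₃))) = d(t, t') — and for every aggregator agg : ℝ → ℝ → ℝ → ℝ that is monotone in each argument and invariant under permutations of its three arguments, there exist two 3-element sets S = {t₁,t₂,t₃} and S' = {t'₁,t'₂,t'₃} of triples such that nelem(S) ≠ nelem(S') while agg(d(t₁,t₂), d(t₁,t₃), d(t₂,t₃)) = agg(d(t'₁,t'₂), d(t'₁,t'₃), d(t'₂,t'₃)). -/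
/-- The number of distinct data values occurring as a coordinate of some triple in `S`
(the volume-based diversity `δ_{V_elem}` for ternary tuples). -/
noncomputable def nelem {α : Type*} (S : Set (α × α × α)) : ℕ :=
  Set.ncard {v : α | ∃ t ∈ S, t.1 = v ∨ t.2.1 = v ∨ t.2.2 = v}

/- **Statement 8.** No distance-based diversity function built from a monotone,
permutation-invariant aggregator and a pseudo-metric oblivious to data values can
distinguish the same sets of triples as the volume-based diversity `nelem`:
there are two 3-element sets of triples with different `nelem` but equal aggregated
pairwise distances. -/
theorem volume_not_distance_based {α : Type*} [Infinite α]
    (d : α × α × α → α × α × α → ℝ)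
    (d_nonneg : ∀ t t', 0 ≤ d t t')
    (d_symm : ∀ t t', d t t' = d t' t)
    (d_self : ∀ t, d t t = 0)
    (d_triangle : ∀ t u v, d t v ≤ d t u + d u v)
    (d_oblivious : ∀ (f : α ≃ α) (t t' : α × α × α),
      d (f t.1, f t.2.1, f t.2.2) (f t'.1, f t'.2.1, f t'.2.2) = d t t')
    (agg : ℝ → ℝ → ℝ → ℝ)
    (agg_mono₁ : ∀ x x' y z, x ≤ x' → agg x y z ≤ agg x' y z)
    (agg_mono₂ : ∀ x y y' z, y ≤ y' → agg x y z ≤ agg x y' z)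
    (agg_mono₃ : ∀ x y z z', z ≤ z' → agg x y z ≤ agg x y z')
    (agg_swap₁ : ∀ x y z, agg x y z = agg y x z)
    (agg_swap₂ : ∀ x y z, agg x y z = agg x z y) :
    ∃ t₁ t₂ t₃ t₁' t₂' t₃' : α × α × α,
      ({t₁, t₂, t₃} : Set (α × α × α)).ncard = 3 ∧
      ({t₁', t₂', t₃'} : Set (α × α × α)).ncard = 3 ∧
      nelem {t₁, t₂, t₃} ≠ nelem {t₁', t₂', t₃'} ∧
      agg (d t₁ t₂) (d t₁ t₃) (d t₂ t₃) = agg (d t₁' t₂') (d t₁' t₃') (d t₂' t₃') := by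
  classical
  -- six distinct data values
  have H : ∃ a b c e f g : α, a ≠ b ∧ a ≠ c ∧ a ≠ e ∧ a ≠ f ∧ a ≠ g ∧ b ≠ c ∧ b ≠ e ∧
      b ≠ f ∧ b ≠ g ∧ c ≠ e ∧ c ≠ f ∧ c ≠ g ∧ e ≠ f ∧ e ≠ g ∧ f ≠ g := by
    obtain ⟨x⟩ : Nonempty (ℕ ↪ α) := ⟨Infinite.natEmbedding α⟩
    exact ⟨x 0, x 1, x 2, x 3, x 4, x 5,
      fun h => by simpa using x.injective h, fun h => by simpa using x.injective h,
      fun h => by simpa using x.injective h, fun h => by simpa using x.injective h,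
      fun h => by simpa using x.injective h, fun h => by simpa using x.injective h,
      fun h => by simpa using x.injective h, fun h => by simpa using x.injective h,
      fun h => by simpa using x.injective h, fun h => by simpa using x.injective h,
      fun h => by simpa using x.injective h, fun h => by simpa using x.injective h,
      fun h => by simpa using x.injective h, fun h => by simpa using x.injective h,
      fun h => by simpa using x.injective h⟩
  obtain ⟨a, b, c, e, f, g, hab, hac, hae, haf, hag, hbc, hbe, hbf, hbg, hce, hcf, hcg,
    hef, heg, hfg⟩ := H
  -- the two sets of triples
  refine ⟨(a, b, c), (b, a, e), (c, e, f), (a, b, c), (b, a, e), (f, g, a), ?_, ?_, ?_, ?_⟩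
  · -- ncard of first set is 3
    rw [Set.ncard_insert_of_notMem (by simp [Prod.ext_iff, hab, hac]),
        Set.ncard_insert_of_notMem (by simp [Prod.ext_iff, hbc]),
        Set.ncard_singleton]
  · rw [Set.ncard_insert_of_notMem (by simp [Prod.ext_iff, hab, haf]),
        Set.ncard_insert_of_notMem (by simp [Prod.ext_iff, hbf]),
        Set.ncard_singleton]
  · -- nelem 5 ≠ nelem 6
    have h1 : {v : α | ∃ t ∈ ({(a, b, c), (b, a, e), (c, e, f)} : Set (α × α × α)),
        t.1 = v ∨ t.2.1 = v ∨ t.2.2 = v} = {a, b, c, e, f} := by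
      ext v
      simp only [Set.mem_insert_iff, Set.mem_setOf_eq, Set.mem_singleton_iff]
      constructor
      · rintro ⟨t, (rfl | rfl | rfl), h⟩ <;> rcases h with rfl | rfl | rfl <;> simp
      · rintro (h | h | h | h | h)
        · exact ⟨(a, b, c), Or.inl rfl, Or.inl h.symm⟩
        · exact ⟨(a, b, c), Or.inl rfl, Or.inr (Or.inl h.symm)⟩
        · exact ⟨(a, b, c), Or.inl rfl, Or.inr (Or.inr h.symm)⟩
        · exact ⟨(b, a, e), Or.inr (Or.inl rfl), Or.inr (Or.inr h.symm)⟩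
        · exact ⟨(c, e, f), Or.inr (Or.inr rfl), Or.inr (Or.inr h.symm)⟩
    have h2 : {v : α | ∃ t ∈ ({(a, b, c), (b, a, e), (f, g, a)} : Set (α × α × α)),
        t.1 = v ∨ t.2.1 = v ∨ t.2.2 = v} = {a, b, c, e, f, g} := by
      ext v
      simp only [Set.mem_insert_iff, Set.mem_setOf_eq, Set.mem_singleton_iff]
      constructor
      · rintro ⟨t, (rfl | rfl | rfl), h⟩ <;> rcases h with rfl | rfl | rfl <;> simp
      · rintro (h | h | h | h | h | h)
        · exact ⟨(a, b, c), Or.inl rfl, Or.inl h.symm⟩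
        · exact ⟨(a, b, c), Or.inl rfl, Or.inr (Or.inl h.symm)⟩
        · exact ⟨(a, b, c), Or.inl rfl, Or.inr (Or.inr h.symm)⟩
        · exact ⟨(b, a, e), Or.inr (Or.inl rfl), Or.inr (Or.inr h.symm)⟩
        · exact ⟨(f, g, a), Or.inr (Or.inr rfl), Or.inl h.symm⟩
        · exact ⟨(f, g, a), Or.inr (Or.inr rfl), Or.inr (Or.inl h.symm)⟩
    have hc1 : nelem ({(a, b, c), (b, a, e), (c, e, f)} : Set (α × α × α)) = 5 := by
      rw [nelem, h1]
      rw [Set.ncard_insert_of_notMem (by simp [hab, hac, hae, haf]),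
          Set.ncard_insert_of_notMem (by simp [hbc, hbe, hbf]),
          Set.ncard_insert_of_notMem (by simp [hce, hcf]),
          Set.ncard_insert_of_notMem (by simp [hef]),
          Set.ncard_singleton]
    have hc2 : nelem ({(a, b, c), (b, a, e), (f, g, a)} : Set (α × α × α)) = 6 := by
      rw [nelem, h2]
      rw [Set.ncard_insert_of_notMem (by simp [hab, hac, hae, haf, hag]),
          Set.ncard_insert_of_notMem (by simp [hbc, hbe, hbf, hbg]),
          Set.ncard_insert_of_notMem (by simp [hce, hcf, hcg]),
          Set.ncard_insert_of_notMem (by simp [hef, heg]),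
          Set.ncard_insert_of_notMem (by simp [hfg]),
          Set.ncard_singleton]
    rw [hc1, hc2]; omega
  · -- equal aggregated distances
    -- σ : a→f, b→g, c→a, e→b, f→c, g→e
    set σ : α ≃ α :=
      Equiv.swap a c * Equiv.swap a f * (Equiv.swap b e * Equiv.swap b g) with hσ
    have hσa : σ a = f := by
      rw [hσ]
      simp only [Equiv.Perm.mul_apply]
      rw [Equiv.swap_apply_of_ne_of_ne hab hag, Equiv.swap_apply_of_ne_of_ne hab hae,
        Equiv.swap_apply_left, Equiv.swap_apply_of_ne_of_ne haf.symm hcf.symm]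
    have hσb : σ b = g := by
      rw [hσ]
      simp only [Equiv.Perm.mul_apply]
      rw [Equiv.swap_apply_left, Equiv.swap_apply_of_ne_of_ne hbg.symm heg.symm,
        Equiv.swap_apply_of_ne_of_ne hag.symm hfg.symm,
        Equiv.swap_apply_of_ne_of_ne hag.symm hcg.symm]
    have hσc : σ c = a := by
      rw [hσ]
      simp only [Equiv.Perm.mul_apply]
      rw [Equiv.swap_apply_of_ne_of_ne hbc.symm hcg,
        Equiv.swap_apply_of_ne_of_ne hbc.symm hce,
        Equiv.swap_apply_of_ne_of_ne hac.symm hcf, Equiv.swap_apply_right]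
    have hσe : σ e = b := by
      rw [hσ]
      simp only [Equiv.Perm.mul_apply]
      rw [Equiv.swap_apply_of_ne_of_ne hbe.symm heg, Equiv.swap_apply_right,
        Equiv.swap_apply_of_ne_of_ne hab.symm hbf,
        Equiv.swap_apply_of_ne_of_ne hab.symm hbc]
    have hσf : σ f = c := by
      rw [hσ]
      simp only [Equiv.Perm.mul_apply]
      rw [Equiv.swap_apply_of_ne_of_ne hbf.symm hfg,
        Equiv.swap_apply_of_ne_of_ne hbf.symm hef.symm, Equiv.swap_apply_right,
        Equiv.swap_apply_left]
    -- τ : b→f, a→g, e→a, c→b, f→e, g→c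
    set τ : α ≃ α :=
      Equiv.swap b c * Equiv.swap b g * Equiv.swap b a * Equiv.swap b e * Equiv.swap b f
      with hτ
    have hτb : τ b = f := by
      rw [hτ]
      simp only [Equiv.Perm.mul_apply]
      rw [Equiv.swap_apply_left, Equiv.swap_apply_of_ne_of_ne hbf.symm hef.symm,
        Equiv.swap_apply_of_ne_of_ne hbf.symm haf.symm,
        Equiv.swap_apply_of_ne_of_ne hbf.symm hfg,
        Equiv.swap_apply_of_ne_of_ne hbf.symm hcf.symm]
    have hτa : τ a = g := by
      rw [hτ]
      simp only [Equiv.Perm.mul_apply]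
      rw [Equiv.swap_apply_of_ne_of_ne hab haf,
        Equiv.swap_apply_of_ne_of_ne hab hae, Equiv.swap_apply_right,
        Equiv.swap_apply_left, Equiv.swap_apply_of_ne_of_ne hbg.symm hcg.symm]
    have hτe : τ e = a := by
      rw [hτ]
      simp only [Equiv.Perm.mul_apply]
      rw [Equiv.swap_apply_of_ne_of_ne hbe.symm hef, Equiv.swap_apply_right,
        Equiv.swap_apply_left, Equiv.swap_apply_of_ne_of_ne hab hag,
        Equiv.swap_apply_of_ne_of_ne hab hac]
    have hτc : τ c = b := by
      rw [hτ]
      simp only [Equiv.Perm.mul_apply]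
      rw [Equiv.swap_apply_of_ne_of_ne hbc.symm hcf,
        Equiv.swap_apply_of_ne_of_ne hbc.symm hce,
        Equiv.swap_apply_of_ne_of_ne hbc.symm hac.symm,
        Equiv.swap_apply_of_ne_of_ne hbc.symm hcg, Equiv.swap_apply_right]
    have hτf : τ f = e := by
      rw [hτ]
      simp only [Equiv.Perm.mul_apply]
      rw [Equiv.swap_apply_right, Equiv.swap_apply_left,
        Equiv.swap_apply_of_ne_of_ne hbe.symm hae.symm,
        Equiv.swap_apply_of_ne_of_ne hbe.symm heg,
        Equiv.swap_apply_of_ne_of_ne hbe.symm hce.symm]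
    have e2 : d (a, b, c) ((c, e, f) : α × α × α) = d (a, b, c) ((f, g, a) : α × α × α) := by
      have := d_oblivious σ (a, b, c) (c, e, f)
      simp only [hσa, hσb, hσc, hσe, hσf] at this
      rw [← this, d_symm]
    have e3 : d (b, a, e) ((c, e, f) : α × α × α) = d (b, a, e) ((f, g, a) : α × α × α) := by
      have := d_oblivious τ (b, a, e) (c, e, f)
      simp only [hτa, hτb, hτc, hτe, hτf] at this
      rw [← this, d_symm]
    rw [e2, e3]
end

section
/- There exist a finite metric space (X, d), finite subsets S₁ ⊆ S₂ ⊆ X, and an element a ∈ X such that δ_W(S₁ ∪ {a}) − δ_W(S₁) < δ_W(S₂ ∪ {a}) − δ_W(S₂); that is, Weitzman's diversity measure δ_W is, in general, not submodular. (A witness is the 4-point metric space {a,b,c,d} with d(b,c) = d(b,d) = 1 and all other pairwise distances equal to 2.) -/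
/-- Weitzman's diversity measure over a distance function `d`: `δ_W(S) = 0` for `|S| ≤ 1`
and `δ_W(S) = max_{a ∈ S} (δ_W(S ∖ {a}) + min_{x ∈ S ∖ {a}} d(a,x))` for `|S| ≥ 2`. -/
noncomputable def weitzman {X : Type*} [DecidableEq X] (d : X → X → ℝ) (S : Finset X) : ℝ :=
  if h2 : 2 ≤ S.card then
    S.attach.sup'
      (Finset.attach_nonempty_iff.mpr (Finset.card_pos.mp (by omega)))
      (fun a => weitzman d (S.erase a.1) +
        (S.erase a.1).inf'
          (Finset.card_pos.mp (by rw [Finset.card_erase_of_mem a.2]; omega))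
          (fun x => d a.1 x))
  else 0
termination_by S.card
decreasing_by
  exact Finset.card_erase_lt_of_mem a.2

/- **Statement 9.** Weitzman's diversity measure is, in general, not submodular:
there are a finite metric space `(X, d)`, finite subsets `S₁ ⊆ S₂ ⊆ X` and `a ∈ X` with
`δ_W(S₁ ∪ {a}) − δ_W(S₁) < δ_W(S₂ ∪ {a}) − δ_W(S₂)`. -/

lemma sup'_attach' {α : Type*} (s : Finset α) (h : s.attach.Nonempty) (f : α → ℝ) :
    s.attach.sup' h (fun a => f a.1) = s.sup' (Finset.attach_nonempty_iff.mp h) f := by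
  apply le_antisymm
  · exact Finset.sup'_le _ _ fun a _ => Finset.le_sup' f a.2
  · exact Finset.sup'_le _ _ fun a ha =>
      Finset.le_sup' (fun b : {x // x ∈ s} => f b.1) (Finset.mem_attach _ ⟨a, ha⟩)

lemma weitzman_eq {X : Type*} [DecidableEq X] (d : X → X → ℝ) (S : Finset X)
    (h2 : 2 ≤ S.card) :
    weitzman d S = S.sup' (Finset.card_pos.mp (by omega))
      (fun a => weitzman d (S.erase a) +
        if he : (S.erase a).Nonempty then (S.erase a).inf' he (fun x => d a x) else 0) := by
  rw [weitzman, dif_pos h2]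
  refine Eq.trans (Finset.sup'_congr _ rfl ?_) (sup'_attach' S _
    (fun a => weitzman d (S.erase a) +
        if he : (S.erase a).Nonempty then (S.erase a).inf' he (fun x => d a x) else 0))
  intro a _
  have he : (S.erase a.1).Nonempty := Finset.card_pos.mp
    (by rw [Finset.card_erase_of_mem a.2]; omega)
  rw [dif_pos he]

lemma weitzman_singleton {X : Type*} [DecidableEq X] (d : X → X → ℝ) (x : X) :
    weitzman d {x} = 0 := by
  rw [weitzman]; simp

lemma weitzman_pair {X : Type*} [DecidableEq X] (d : X → X → ℝ) {x y : X} (h : x ≠ y)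
    (hs : d x y = d y x) : weitzman d {x, y} = d x y := by
  have hc : ({x, y} : Finset X).card = 2 := by
    rw [Finset.card_insert_of_notMem (by simpa using h), Finset.card_singleton]
  rw [weitzman_eq d _ (by omega)]
  rw [Finset.sup'_insert, Finset.sup'_singleton]
  have e1 : ({x, y} : Finset X).erase x = {y} := by
    rw [Finset.erase_insert (by simpa using h)]
  have e2 : ({x, y} : Finset X).erase y = {x} := by
    rw [Finset.pair_comm, Finset.erase_insert (by simpa using h.symm)]
  rw [e1, e2]
  simp [weitzman_singleton, hs]
  all_goals simp

def dN : Fin 4 → Fin 4 → ℕ := fun x y =>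
  if x = y then 0 else if x = 1 ∨ y = 1 then (if x = 0 ∨ y = 0 then 2 else 1) else 2

def dW : Fin 4 → Fin 4 → ℝ := fun x y => (dN x y : ℝ)

lemma weitzman_triple : weitzman dW {2, 1, 3} = 3 := by
  have hc : ({2, 1, 3} : Finset (Fin 4)).card = 3 := by decide
  rw [weitzman_eq dW _ (by omega)]
  rw [Finset.sup'_insert, Finset.sup'_insert, Finset.sup'_singleton]
  have e1 : ({2, 1, 3} : Finset (Fin 4)).erase 2 = {1, 3} := by decide
  have e2 : ({2, 1, 3} : Finset (Fin 4)).erase 1 = {2, 3} := by decide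
  have e3 : ({2, 1, 3} : Finset (Fin 4)).erase 3 = {2, 1} := by decide
  rw [e1, e2, e3]
  rw [weitzman_pair dW (by decide) (by simp [dW, dN]),
      weitzman_pair dW (show (2:Fin 4) ≠ 3 by decide) (by simp [dW, dN]),
      weitzman_pair dW (show (2:Fin 4) ≠ 1 by decide) (by simp [dW, dN])]
  rw [dif_pos, dif_pos, dif_pos]
  · show _ = (3:ℝ)
    rw [Finset.inf'_insert, Finset.inf'_insert, Finset.inf'_insert,
      Finset.inf'_singleton, Finset.inf'_singleton, Finset.inf'_singleton]
    simp [dW, dN]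
    norm_num
    all_goals simp
  all_goals simp

open Classical in
theorem weitzman_not_submodular :
    ∃ (X : Type) (d : X → X → ℝ), Finite X ∧
      (∀ x y, 0 ≤ d x y) ∧
      (∀ x y, d x y = 0 ↔ x = y) ∧
      (∀ x y, d x y = d y x) ∧
      (∀ x y z, d x z ≤ d x y + d y z) ∧
      ∃ (S₁ S₂ : Finset X) (a : X), S₁ ⊆ S₂ ∧
        weitzman d (insert a S₁) - weitzman d S₁ <
          weitzman d (insert a S₂) - weitzman d S₂ := by
  refine ⟨Fin 4, dW, Finite.of_fintype _, ?_, ?_, ?_, ?_, {1}, {1, 3}, 2, by decide, ?_⟩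
  · intro x y; simp only [dW]; positivity
  · intro x y
    simp only [dW, Nat.cast_eq_zero]
    exact (by decide : ∀ x y : Fin 4, dN x y = 0 ↔ x = y) x y
  · intro x y
    simp only [dW]
    exact_mod_cast ((by decide : ∀ x y : Fin 4, dN x y = dN y x) x y)
  · intro x y z
    simp only [dW]
    exact_mod_cast (by decide : ∀ x y z : Fin 4, dN x z ≤ dN x y + dN y z) x y z
  · have hinst : (fun a b => Classical.propDecidable (a = b) : DecidableEq (Fin 4)) =
        instDecidableEqFin 4 := Subsingleton.elim _ _
    rw [hinst]
    rw [weitzman_triple, weitzman_singleton,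
      weitzman_pair dW (show (2:Fin 4) ≠ 1 by decide) (by simp [dW, dN]),
      weitzman_pair dW (show (1:Fin 4) ≠ 3 by decide) (by simp [dW, dN])]
    have a1 : dN 2 1 = 1 := by decide
    have a2 : dN 1 3 = 1 := by decide
    rw [dW, dW, a1, a2]
    norm_num
end

section
/- Let X be a finite nonempty type and d : X → X → ℝ an ultrametric, i.e., a metric additionally satisfying the strong triangle inequality d(a,c) ≤ max(d(a,b), d(b,c)) for all a, b, c ∈ X. Let r = max_{a,b∈X} d(a,b) be the radius of X. Then there exist a measurable space (Ω, 𝒮), a measure μ on Ω, and a function β : X → Set Ω with each β(x) measurable, such that for every nonempty S ⊆ X: μ(⋃_{s∈S} β(s)) = δ_W(S) + r, where δ_W is Weitzman's diversity measure defined from d. -/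
open MeasureTheory

lemma weitzman_nonneg {X : Type*} [DecidableEq X] (d : X → X → ℝ) (hd : ∀ x y, 0 ≤ d x y)
    (S : Finset X) : 0 ≤ weitzman d S := by
  induction S using Finset.strongInduction with
  | _ S ih =>
    rw [weitzman]
    split_ifs with h2
    · have h1 : S.Nonempty := Finset.card_pos.mp (by omega)
      obtain ⟨a, ha⟩ := h1
      have hne : (S.erase a).Nonempty :=
        Finset.card_pos.mp (by rw [Finset.card_erase_of_mem ha]; omega)
      refine le_trans ?_ (Finset.le_sup' _ (Finset.mem_attach _ ⟨a, ha⟩))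
      have h3 := ih (S.erase a) (Finset.erase_ssubset ha)
      have h4 : 0 ≤ (S.erase a).inf' hne (fun x => d a x) :=
        Finset.le_inf' _ _ fun x _ => hd a x
      linarith
    · exact le_refl 0

section Aux

variable {X : Type*} {n : ℕ}

/-- The cell of `x` at level `t`: the pair `(i, t)` where `i` is the least index (via `e`)
in the closed ball of radius `t` around `x`. -/
def myBeta (e : X ≃ Fin n) (d : X → X → ℝ) (r : ℝ) (x : X) : Set (Fin n × ℝ) :=
  {p | d x (e.symm p.1) ≤ p.2 ∧ p.2 < r ∧ ∀ j : Fin n, d x (e.symm j) ≤ p.2 → p.1 ≤ j}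

noncomputable def myMu (n : ℕ) : Measure (Fin n × ℝ) :=
  Measure.sum fun i : Fin n => (volume : Measure ℝ).map fun t => (i, t)

lemma sec_myBeta (e : X ≃ Fin n) (d : X → X → ℝ) (r : ℝ) (x : X) (i : Fin n) :
    (fun t => (i, t)) ⁻¹' myBeta e d r x =
      (Set.Ici (d x (e.symm i)) ∩ Set.Iio r) ∩
        ⋂ j : Fin n, {t : ℝ | d x (e.symm j) ≤ t → i ≤ j} := by
  ext t
  simp only [Set.mem_preimage, myBeta, Set.mem_setOf_eq, Set.mem_inter_iff, Set.mem_Ici,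
    Set.mem_Iio, Set.mem_iInter]
  tauto

lemma measurable_sec_myBeta (e : X ≃ Fin n) (d : X → X → ℝ) (r : ℝ) (x : X) (i : Fin n) :
    MeasurableSet ((fun t => (i, t)) ⁻¹' myBeta e d r x) := by
  rw [sec_myBeta]
  refine (measurableSet_Ici.inter measurableSet_Iio).inter (MeasurableSet.iInter fun j => ?_)
  by_cases h : i ≤ j
  · have : {t : ℝ | d x (e.symm j) ≤ t → i ≤ j} = Set.univ := by
      ext t; simp [h]
    rw [this]; exact MeasurableSet.univ
  · have : {t : ℝ | d x (e.symm j) ≤ t → i ≤ j} = Set.Iio (d x (e.symm j)) := by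
      ext t; simp only [Set.mem_setOf_eq, Set.mem_Iio]
      constructor
      · intro ht; by_contra hc; exact h (ht (not_lt.mp hc))
      · intro ht hd'; exact absurd hd' (not_le.mpr ht)
    rw [this]; exact measurableSet_Iio

lemma measurable_myBeta (e : X ≃ Fin n) (d : X → X → ℝ) (r : ℝ) (x : X) :
    MeasurableSet (myBeta e d r x) := by
  have h : myBeta e d r x = ⋃ i : Fin n, {i} ×ˢ ((fun t => (i, t)) ⁻¹' myBeta e d r x) := by
    ext ⟨j, t⟩
    simp only [Set.mem_iUnion, Set.mem_prod, Set.mem_singleton_iff, Set.mem_preimage]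
    constructor
    · intro h; exact ⟨j, rfl, h⟩
    · rintro ⟨i, rfl, h⟩; exact h
  rw [h]
  exact MeasurableSet.iUnion fun i =>
    (measurableSet_singleton i).prod (measurable_sec_myBeta e d r x i)

lemma myMu_apply (A : Set (Fin n × ℝ)) (hA : MeasurableSet A) :
    myMu n A = ∑' i : Fin n, volume ((fun t => (i, t)) ⁻¹' A) := by
  rw [myMu, Measure.sum_apply _ hA]
  exact tsum_congr fun i => Measure.map_apply measurable_prodMk_left hA

lemma myMu_of_disjoint_sections (A : Set (Fin n × ℝ)) (hA : MeasurableSet A)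
    (hsec : ∀ i, MeasurableSet ((fun t => (i, t)) ⁻¹' A))
    (hdisj : Pairwise (Function.onFun Disjoint fun i => (fun t => (i, t)) ⁻¹' A)) :
    myMu n A = volume (⋃ i, (fun t => (i, t)) ⁻¹' A) := by
  rw [myMu_apply A hA, measure_iUnion hdisj hsec]

end Aux

/- **Statement 10.** If `d` is an ultrametric on a finite nonempty set `X` with radius `r`
(the maximal pairwise distance), then Weitzman's diversity measure `δ_W` is, up to the
additive constant `r`, a volume-based diversity function: there is a volume assignment
`(Ω, 𝒮, μ, β)` with `μ(⋃ s ∈ S, β s) = δ_W(S) + r` for every nonempty finite `S ⊆ X`. -/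
open Classical in
theorem weitzman_ultrametric_is_volume_based {X : Type*} [Finite X] [Nonempty X]
    (d : X → X → ℝ)
    (d_nonneg : ∀ x y, 0 ≤ d x y)
    (d_eq : ∀ x y, d x y = 0 ↔ x = y)
    (d_symm : ∀ x y, d x y = d y x)
    (d_ultra : ∀ x y z, d x z ≤ max (d x y) (d y z))
    (r : ℝ) (hr_ub : ∀ x y, d x y ≤ r) (hr_attained : ∃ x y, d x y = r) :
    ∃ (Ω : Type) (m : MeasurableSpace Ω) (μ : @Measure Ω m) (β : X → Set Ω),
      (∀ x : X, MeasurableSet[m] (β x)) ∧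
      ∀ S : Finset X, S.Nonempty →
        μ (⋃ s ∈ S, β s) = ENNReal.ofReal (weitzman d S + r) := by
  classical
  letI : Fintype X := Fintype.ofFinite X
  set n := Fintype.card X with hn
  let e : X ≃ Fin n := Fintype.equivFin X
  have hd0 : ∀ x, d x x = 0 := fun x => (d_eq x x).mpr rfl
  have hr0 : 0 ≤ r := by
    obtain ⟨x, y, hxy⟩ := hr_attained
    exact hxy ▸ d_nonneg x y
  -- sections of a single `myBeta` are pairwise disjoint
  have hsame : ∀ (x : X) (i i' : Fin n) (t : ℝ),
      (i, t) ∈ myBeta e d r x → (i', t) ∈ myBeta e d r x → i = i' := by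
    rintro x i i' t ⟨h1, _, h3⟩ ⟨h1', _, h3'⟩
    exact le_antisymm (h3 i' h1') (h3' i h1)
  have hdisj : ∀ x : X,
      Pairwise (Function.onFun Disjoint fun i => (fun t => (i, t)) ⁻¹' myBeta e d r x) := by
    intro x i i' hii'
    rw [Function.onFun, Set.disjoint_left]
    intro t ht ht'
    exact hii' (hsame x i i' t ht ht')
  -- union of sections of a single `myBeta` is `[0, r)`
  have hsecU : ∀ x : X, (⋃ i, (fun t => (i, t)) ⁻¹' myBeta e d r x) = Set.Ico 0 r := by
    intro x
    ext t
    simp only [Set.mem_iUnion, Set.mem_preimage, Set.mem_Ico]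
    constructor
    · rintro ⟨i, h1, h2, _⟩
      exact ⟨le_trans (d_nonneg _ _) h1, h2⟩
    · rintro ⟨ht0, htr⟩
      set B : Finset (Fin n) := Finset.univ.filter (fun j => d x (e.symm j) ≤ t) with hB
      have hBne : B.Nonempty := ⟨e x, by simp [hB, hd0 x, ht0]⟩
      have hmem : ∀ j, j ∈ B ↔ d x (e.symm j) ≤ t := by
        intro j; simp [hB]
      refine ⟨B.min' hBne, (hmem _).mp (B.min'_mem hBne), htr, fun j hj => ?_⟩
      exact B.min'_le j ((hmem j).mpr hj)
  -- measure of a single cell set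
  have hbase : ∀ x : X, myMu n (myBeta e d r x) = ENNReal.ofReal r := by
    intro x
    rw [myMu_of_disjoint_sections _ (measurable_myBeta e d r x)
      (measurable_sec_myBeta e d r x) (hdisj x), hsecU x, Real.volume_Ico, sub_zero]
  -- transfer lemmas
  have htrans : ∀ (x x' : X) (p : Fin n × ℝ),
      p ∈ myBeta e d r x → d x x' ≤ p.2 → p ∈ myBeta e d r x' := by
    rintro x x' ⟨i, t⟩ ⟨h1, h2, h3⟩ hdx
    have hiff : ∀ j : Fin n, d x' (e.symm j) ≤ t ↔ d x (e.symm j) ≤ t := by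
      intro j
      constructor
      · intro h
        refine le_trans (d_ultra x x' (e.symm j)) (max_le hdx h)
      · intro h
        refine le_trans (d_ultra x' x (e.symm j)) (max_le ?_ h)
        rwa [d_symm x' x]
    exact ⟨(hiff i).mpr h1, h2, fun j hj => h3 j ((hiff j).mp hj)⟩
  have hboth : ∀ (x x' : X) (p : Fin n × ℝ),
      p ∈ myBeta e d r x → p ∈ myBeta e d r x' → d x x' ≤ p.2 := by
    rintro x x' ⟨i, t⟩ ⟨h1, _, _⟩ ⟨h1', _, _⟩
    refine le_trans (d_ultra x (e.symm i) x') (max_le h1 ?_)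
    rwa [d_symm]
  -- measurability of finite unions
  have hmeasU : ∀ S : Finset X, MeasurableSet (⋃ s ∈ S, myBeta e d r s) :=
    fun S => S.measurableSet_biUnion fun s _ => measurable_myBeta e d r s
  -- the key recursion step for the measure
  have hstep : ∀ (S : Finset X) (a : X) (ha : a ∈ S) (hne : (S.erase a).Nonempty),
      myMu n (⋃ s ∈ S, myBeta e d r s) =
        myMu n (⋃ s ∈ S.erase a, myBeta e d r s) +
          ENNReal.ofReal ((S.erase a).inf' hne (fun x => d a x)) := by
    intro S a ha hne
    set m := (S.erase a).inf' hne (fun x => d a x) with hm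
    have hm0 : 0 ≤ m := Finset.le_inf' _ _ fun x _ => d_nonneg a x
    have hmr : m ≤ r := by
      obtain ⟨x, hx⟩ := hne
      exact le_trans (Finset.inf'_le _ hx) (hr_ub a x)
    set U' := ⋃ s ∈ S.erase a, myBeta e d r s with hU'
    set γ := myBeta e d r a ∩ {p : Fin n × ℝ | p.2 < m} with hγdef
    have hγ : myBeta e d r a \ U' = γ := by
      ext p
      simp only [hU', hγdef, Set.mem_diff, Set.mem_iUnion, Set.mem_inter_iff,
        Set.mem_setOf_eq, not_exists]
      constructor
      · rintro ⟨hpa, hnp⟩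
        refine ⟨hpa, ?_⟩
        by_contra hlt
        push_neg at hlt
        obtain ⟨x, hx, hmx⟩ := Finset.exists_mem_eq_inf' hne (fun x => d a x)
        exact hnp x hx (htrans a x p hpa (le_trans hmx.symm.le hlt))
      · rintro ⟨hpa, hpm⟩
        refine ⟨hpa, fun x hx hpx => ?_⟩
        have h1 : d a x ≤ p.2 := hboth a x p hpa hpx
        have h2 : m ≤ p.2 := le_trans (Finset.inf'_le _ hx) h1
        linarith
    have hγmeas : MeasurableSet γ := by
      rw [hγdef]
      exact (measurable_myBeta e d r a).inter (measurable_snd measurableSet_Iio)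
    have hUsplit : (⋃ s ∈ S, myBeta e d r s) = U' ∪ (myBeta e d r a \ U') := by
      rw [Set.union_diff_self]
      conv_lhs => rw [← Finset.insert_erase ha]
      rw [Finset.set_biUnion_insert]
      exact Set.union_comm _ _
    rw [hUsplit, measure_union Set.disjoint_sdiff_right
      ((measurable_myBeta e d r a).diff (hmeasU _)), hγ]
    congr 1
    -- μ γ = ofReal m
    have hsecγ : ∀ i : Fin n, (fun t => (i, t)) ⁻¹' γ =
        ((fun t => (i, t)) ⁻¹' myBeta e d r a) ∩ Set.Iio m := fun i => rfl
    have hsecγmeas : ∀ i, MeasurableSet ((fun t => (i, t)) ⁻¹' γ) := by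
      intro i
      rw [hsecγ]
      exact (measurable_sec_myBeta e d r a i).inter measurableSet_Iio
    have hγdisj : Pairwise (Function.onFun Disjoint fun i => (fun t => (i, t)) ⁻¹' γ) := by
      intro i i' hii'
      rw [Function.onFun, Set.disjoint_left]
      intro t ht ht'
      rw [hsecγ] at ht ht'
      exact hii' (hsame a i i' t ht.1 ht'.1)
    rw [myMu_of_disjoint_sections γ hγmeas hsecγmeas hγdisj]
    have : (⋃ i, (fun t => (i, t)) ⁻¹' γ) = Set.Ico 0 m := by
      calc (⋃ i, (fun t => (i, t)) ⁻¹' γ)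
          = (⋃ i, ((fun t => (i, t)) ⁻¹' myBeta e d r a)) ∩ Set.Iio m := by
            simp only [hsecγ]; rw [Set.iUnion_inter]
        _ = Set.Ico 0 r ∩ Set.Iio m := by rw [hsecU a]
        _ = Set.Ico 0 m := by rw [Set.Ico_inter_Iio, min_eq_right hmr]
    rw [this, Real.volume_Ico, sub_zero]
  -- main induction
  refine ⟨Fin n × ℝ, inferInstance, myMu n, myBeta e d r, measurable_myBeta e d r, ?_⟩
  intro S
  induction S using Finset.strongInduction with
  | _ S ih =>
    intro hSne
    by_cases h2 : 2 ≤ S.card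
    · -- for every a ∈ S the value is the measure
      have hval : ∀ a (ha : a ∈ S),
          myMu n (⋃ s ∈ S, myBeta e d r s) =
            ENNReal.ofReal ((weitzman d (S.erase a) +
              (S.erase a).inf'
                (Finset.card_pos.mp (by rw [Finset.card_erase_of_mem ha]; omega))
                (fun x => d a x)) + r) := by
        intro a ha
        have hne : (S.erase a).Nonempty :=
          Finset.card_pos.mp (by rw [Finset.card_erase_of_mem ha]; omega)
        have hwnn := weitzman_nonneg d d_nonneg (S.erase a)
        have hm0 : 0 ≤ (S.erase a).inf' hne (fun x => d a x) :=
          Finset.le_inf' _ _ fun x _ => d_nonneg a x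
        rw [hstep S a ha hne, ih (S.erase a) (Finset.erase_ssubset ha) hne,
          ← ENNReal.ofReal_add (by linarith) hm0]
        congr 1
        ring
    -- all the candidate values are equal
      obtain ⟨a₀, ha₀⟩ := hSne
      have hne₀ : (S.erase a₀).Nonempty :=
        Finset.card_pos.mp (by rw [Finset.card_erase_of_mem ha₀]; omega)
      have hconst : ∀ a (ha : a ∈ S),
          weitzman d (S.erase a) +
            (S.erase a).inf'
              (Finset.card_pos.mp (by rw [Finset.card_erase_of_mem ha]; omega))
              (fun x => d a x) =
          weitzman d (S.erase a₀) +
            (S.erase a₀).inf'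
              (Finset.card_pos.mp (by rw [Finset.card_erase_of_mem ha₀]; omega))
              (fun x => d a₀ x) := by
        intro a ha
        have hne : (S.erase a).Nonempty :=
          Finset.card_pos.mp (by rw [Finset.card_erase_of_mem ha]; omega)
        have h1 := (hval a ha).symm.trans (hval a₀ ha₀)
        have hwnn := weitzman_nonneg d d_nonneg (S.erase a)
        have hwnn₀ := weitzman_nonneg d d_nonneg (S.erase a₀)
        have hm0 : 0 ≤ (S.erase a).inf' hne (fun x => d a x) :=
          Finset.le_inf' _ _ fun x _ => d_nonneg a x
        have hm0₀ : 0 ≤ (S.erase a₀).inf' hne₀ (fun x => d a₀ x) :=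
          Finset.le_inf' _ _ fun x _ => d_nonneg a₀ x
        have := (ENNReal.ofReal_eq_ofReal_iff (by linarith) (by linarith)).mp h1
        linarith
      have hw : weitzman d S =
          weitzman d (S.erase a₀) +
            (S.erase a₀).inf'
              (Finset.card_pos.mp (by rw [Finset.card_erase_of_mem ha₀]; omega))
              (fun x => d a₀ x) := by
        rw [weitzman, dif_pos h2]
        apply le_antisymm
        · apply Finset.sup'_le
          rintro ⟨a, ha⟩ _
          exact le_of_eq (hconst a ha)
        · exact Finset.le_sup'
            (fun a : {x // x ∈ S} => weitzman d (S.erase a.1) +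
              (S.erase a.1).inf'
                (Finset.card_pos.mp (by rw [Finset.card_erase_of_mem a.2]; omega))
                (fun x => d a.1 x))
            (Finset.mem_attach _ ⟨a₀, ha₀⟩)
      rw [hval a₀ ha₀, hw]
    · -- singleton case
      have h1 : S.card = 1 := by
        have := Finset.card_pos.mpr hSne
        omega
      obtain ⟨a, rfl⟩ := Finset.card_eq_one.mp h1
      have hw : weitzman d {a} = 0 := by
        rw [weitzman, dif_neg h2]
      rw [hw, zero_add]
      rw [show (⋃ s ∈ ({a} : Finset X), myBeta e d r s) = myBeta e d r a by simp]
      exact hbase a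
end

section
/- Let (Ω, 𝒮) be a measurable space, μ a measure on Ω, U a type, and β : U → Set Ω with each β(a) measurable, μ(β(a)) < ∞ for all a, and μ(β(a)) = μ(β(b)) for all a, b ∈ U (all singletons have the same diversity). Define the marginal distance d(a,b) = μ(β(a) ∖ β(b)). Then d is a pseudo-metric: d(a,b) = d(b,a) for all a, b ∈ U; d(a,a) = 0; and d(a,c) ≤ d(a,b) + d(b,c) for all a, b, c ∈ U. -/
open MeasureTheory

/- **Statement 12.** If all balls of a volume assignment have finite and equal measure
(all singletons have the same diversity), then the marginal distance
`d(a,b) = μ(β a ∖ β b)` is a pseudo-metric: symmetric, zero on the diagonal, and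
satisfying the triangle inequality (in `ℝ≥0∞`). -/
theorem marginal_distance_pseudometric {Ω U : Type*} [MeasurableSpace Ω]
    (μ : Measure Ω) (β : U → Set Ω) (hβ : ∀ a : U, MeasurableSet (β a))
    (hfin : ∀ a : U, μ (β a) < ⊤)
    (hsame : ∀ a b : U, μ (β a) = μ (β b))
    (d : U → U → ENNReal)
    (hd : ∀ a b : U, d a b = μ (β a \ β b)) :
    (∀ a b : U, d a b = d b a) ∧
    (∀ a : U, d a a = 0) ∧
    (∀ a b c : U, d a c ≤ d a b + d b c) := by
  refine ⟨fun a b => ?_, fun a => ?_, fun a b c => ?_⟩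
  · rw [hd, hd]
    have h1 := measure_diff_add_inter (β a) (hβ b) (μ := μ)
    have h2 := measure_diff_add_inter (β b) (hβ a) (μ := μ)
    have hi : μ (β b ∩ β a) = μ (β a ∩ β b) := by rw [Set.inter_comm]
    have hlt : μ (β a ∩ β b) ≠ ⊤ :=
      (lt_of_le_of_lt (measure_mono Set.inter_subset_left) (hfin a)).ne
    have : μ (β a \ β b) + μ (β a ∩ β b) = μ (β b \ β a) + μ (β a ∩ β b) := by
      rw [h1, ← hi, h2, hsame a b]
    exact WithTop.add_right_cancel hlt this
  · rw [hd, Set.diff_self, measure_empty]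
  · rw [hd, hd, hd]
    calc μ (β a \ β c) ≤ μ ((β a \ β b) ∪ (β b \ β c)) := by
          apply measure_mono
          intro x hx
          by_cases h : x ∈ β b
          · exact Or.inr ⟨h, hx.2⟩
          · exact Or.inl ⟨hx.1, h⟩
      _ ≤ _ := measure_union_le _ _
end

section
/- Let A be a finite nonempty set, (Ω, 𝒮) a measurable space, μ a finite measure on Ω, and β : A → Set Ω with each β(t) measurable; define δ(S) = (μ(⋃_{t∈S} β(t))).toReal for finite S ⊆ A. Let k ≥ 1 and let t₁, …, t_k ∈ A be any greedy sequence, i.e., for each i ∈ {1,…,k} and every t ∈ A, δ({t₁,…,t_{i−1}} ∪ {t}) ≤ δ({t₁,…,t_{i−1}} ∪ {t_i}). Then δ({t₁,…,t_k}) ≥ (1 − 1/e) · max_{S ⊆ A, |S| = k} δ(S), where e is Euler's number. -/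
open MeasureTheory

/-- The volume-based diversity of a finite set of elements: the (real-valued) measure of
the union of their balls. -/
noncomputable def divVol {A Ω : Type*} [MeasurableSpace Ω] (μ : Measure Ω)
    (β : A → Set Ω) (S : Finset A) : ℝ :=
  (μ (⋃ a ∈ S, β a)).toReal

open Classical in
lemma divVol_insert_eq {A Ω : Type*} [MeasurableSpace Ω] (μ : Measure Ω) [IsFiniteMeasure μ]
    (β : A → Set Ω) (hβ : ∀ a : A, MeasurableSet (β a)) (F : Finset A) (s : A) :
    divVol μ β (insert s F) = divVol μ β F + (μ (β s \ ⋃ a ∈ F, β a)).toReal := by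
  classical
  have hU : MeasurableSet (⋃ a ∈ F, β a) := F.measurableSet_biUnion (fun b _ => hβ b)
  unfold divVol
  rw [Finset.set_biUnion_insert]
  have h1 : β s ∪ ⋃ a ∈ F, β a = (⋃ a ∈ F, β a) ∪ (β s \ ⋃ a ∈ F, β a) := by
    rw [Set.union_diff_self, Set.union_comm]
  rw [h1, measure_union disjoint_sdiff_self_right ((hβ s).diff hU),
    ENNReal.toReal_add (measure_ne_top μ _) (measure_ne_top μ _)]

open Classical in
lemma divVol_le_sum {A Ω : Type*} [MeasurableSpace Ω] (μ : Measure Ω) [IsFiniteMeasure μ]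
    (β : A → Set Ω) (G S : Finset A) :
    divVol μ β S ≤ divVol μ β G + ∑ s ∈ S, (μ (β s \ ⋃ a ∈ G, β a)).toReal := by
  classical
  have h1 : μ (⋃ a ∈ S, β a) ≤ μ (⋃ a ∈ G, β a) + ∑ s ∈ S, μ (β s \ ⋃ a ∈ G, β a) := by
    calc μ (⋃ a ∈ S, β a)
        ≤ μ ((⋃ a ∈ G, β a) ∪ ⋃ s ∈ S, (β s \ ⋃ a ∈ G, β a)) := by
          apply measure_mono
          intro x hx
          by_cases hxG : x ∈ ⋃ a ∈ G, β a
          · exact Set.mem_union_left _ hxG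
          · simp only [Set.mem_iUnion] at hx
            obtain ⟨a, ha, hxa⟩ := hx
            refine Set.mem_union_right _ ?_
            simp only [Set.mem_iUnion]
            exact ⟨a, ha, hxa, hxG⟩
      _ ≤ μ (⋃ a ∈ G, β a) + μ (⋃ s ∈ S, (β s \ ⋃ a ∈ G, β a)) := measure_union_le _ _
      _ ≤ μ (⋃ a ∈ G, β a) + ∑ s ∈ S, μ (β s \ ⋃ a ∈ G, β a) :=
          add_le_add_right (measure_biUnion_finset_le _ _) _
  have hne : (μ (⋃ a ∈ G, β a) + ∑ s ∈ S, μ (β s \ ⋃ a ∈ G, β a)) ≠ ⊤ := by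
    apply ENNReal.add_ne_top.2
    constructor
    · exact measure_ne_top μ _
    · exact (ENNReal.sum_lt_top.2 fun s _ => measure_lt_top μ _).ne
  calc divVol μ β S ≤ (μ (⋃ a ∈ G, β a) + ∑ s ∈ S, μ (β s \ ⋃ a ∈ G, β a)).toReal :=
        ENNReal.toReal_mono hne h1
    _ = divVol μ β G + ∑ s ∈ S, (μ (β s \ ⋃ a ∈ G, β a)).toReal := by
        rw [ENNReal.toReal_add (measure_ne_top μ _)
          (ENNReal.sum_lt_top.2 fun s _ => measure_lt_top μ _).ne, ENNReal.toReal_sum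
          (fun s _ => measure_ne_top μ _)]
        rfl

/- **Statement 13.** Greedy `(1 − 1/e)`-approximation for volume-based diversity
(Nemhauser–Wolsey–Fisher): if `t 0, …, t (k−1)` is a greedy sequence, i.e., each `t i`
maximizes the marginal diversity with respect to the previously chosen elements, then
`δ({t 0, …, t (k−1)}) ≥ (1 − 1/e) · δ(S)` for every `k`-element subset `S` — in particular
for the `k`-subset of maximal diversity. -/
open Classical in
theorem greedy_approximation {A Ω : Type*} [Fintype A] [Nonempty A] [MeasurableSpace Ω]
    (μ : Measure Ω) [IsFiniteMeasure μ]
    (β : A → Set Ω) (hβ : ∀ a : A, MeasurableSet (β a))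
    (k : ℕ) (hk : 1 ≤ k) (t : ℕ → A)
    (hgreedy : ∀ i < k, ∀ s : A,
      divVol μ β (insert s ((Finset.range i).image t)) ≤
        divVol μ β (insert (t i) ((Finset.range i).image t)))
    (S : Finset A) (hS : S.card = k) :
    (1 - 1 / Real.exp 1) * divVol μ β S ≤ divVol μ β ((Finset.range k).image t) := by
  classical
  set G : ℕ → Finset A := fun i => (Finset.range i).image t with hGdef
  have hK1 : (1:ℝ) ≤ (k:ℝ) := by exact_mod_cast hk
  have hK0 : (0:ℝ) < (k:ℝ) := by linarith
  have hGsucc : ∀ i, G (i+1) = insert (t i) (G i) := by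
    intro i
    simp [hGdef, Finset.range_add_one]
  -- key recursive inequality
  have key : ∀ i < k, divVol μ β S - divVol μ β (G (i+1)) ≤
      (1 - 1/(k:ℝ)) * (divVol μ β S - divVol μ β (G i)) := by
    intro i hi
    have hstep : divVol μ β S ≤ divVol μ β (G i) +
        (k:ℝ) * (divVol μ β (G (i+1)) - divVol μ β (G i)) := by
      have hsum := divVol_le_sum μ β (G i) S
      have hbound : ∑ s ∈ S, (μ (β s \ ⋃ a ∈ G i, β a)).toReal ≤
          (k:ℝ) * (divVol μ β (G (i+1)) - divVol μ β (G i)) := by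
        have hterm : ∀ s ∈ S, (μ (β s \ ⋃ a ∈ G i, β a)).toReal ≤
            divVol μ β (G (i+1)) - divVol μ β (G i) := by
          intro s _
          have h1 := divVol_insert_eq μ β hβ (G i) s
          have h2 : divVol μ β (insert s (G i)) ≤ divVol μ β (insert (t i) (G i)) :=
            hgreedy i hi s
          have h3 : divVol μ β (insert (t i) (G i)) = divVol μ β (G (i+1)) := by
            rw [hGsucc]
          linarith
        calc ∑ s ∈ S, (μ (β s \ ⋃ a ∈ G i, β a)).toReal
            ≤ ∑ _s ∈ S, (divVol μ β (G (i+1)) - divVol μ β (G i)) :=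
              Finset.sum_le_sum hterm
          _ = (k:ℝ) * (divVol μ β (G (i+1)) - divVol μ β (G i)) := by
              rw [Finset.sum_const, hS, nsmul_eq_mul]
      linarith
    have hdiv : (divVol μ β S - divVol μ β (G i)) / (k:ℝ) ≤
        divVol μ β (G (i+1)) - divVol μ β (G i) := by
      rw [div_le_iff₀ hK0]
      nlinarith
    have hexp : (1 - 1/(k:ℝ)) * (divVol μ β S - divVol μ β (G i)) =
        (divVol μ β S - divVol μ β (G i)) - (divVol μ β S - divVol μ β (G i)) / (k:ℝ) := by
      field_simp
    linarith
  -- induction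
  have main : ∀ i ≤ k, divVol μ β S - divVol μ β (G i) ≤
      (1 - 1/(k:ℝ))^i * divVol μ β S := by
    intro i
    induction i with
    | zero =>
      intro _
      have : divVol μ β (G 0) = 0 := by simp [hGdef, divVol]
      rw [this]
      simp
    | succ n ih =>
      intro hn
      have hnk : n < k := hn
      have h1 := key n hnk
      have h2 := ih (le_of_lt hnk)
      have h0 : (0:ℝ) ≤ 1 - 1/(k:ℝ) := by
        rw [sub_nonneg, div_le_one hK0]
        exact hK1
      calc divVol μ β S - divVol μ β (G (n+1))
          ≤ (1 - 1/(k:ℝ)) * (divVol μ β S - divVol μ β (G n)) := h1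
        _ ≤ (1 - 1/(k:ℝ)) * ((1 - 1/(k:ℝ))^n * divVol μ β S) :=
            mul_le_mul_of_nonneg_left h2 h0
        _ = (1 - 1/(k:ℝ))^(n+1) * divVol μ β S := by ring
  have hfin := main k le_rfl
  -- (1 - 1/k)^k ≤ 1/e
  have h0 : (0:ℝ) ≤ 1 - 1/(k:ℝ) := by
    rw [sub_nonneg, div_le_one hK0]; exact hK1
  have h1 : 1 - 1/(k:ℝ) ≤ Real.exp (-(1/(k:ℝ))) := by
    have := Real.add_one_le_exp (-(1/(k:ℝ)))
    linarith
  have hpow : (1 - 1/(k:ℝ))^k ≤ 1 / Real.exp 1 := by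
    calc (1 - 1/(k:ℝ))^k ≤ (Real.exp (-(1/(k:ℝ))))^k := pow_le_pow_left₀ h0 h1 k
      _ = Real.exp ((k:ℝ) * (-(1/(k:ℝ)))) := by rw [← Real.exp_nat_mul]
      _ = Real.exp (-1) := by
          congr 1
          field_simp
      _ = 1 / Real.exp 1 := by rw [Real.exp_neg]; ring
  have hSnonneg : 0 ≤ divVol μ β S := ENNReal.toReal_nonneg
  have hfinal : (1 - 1/(k:ℝ))^k * divVol μ β S ≤ (1 / Real.exp 1) * divVol μ β S :=
    mul_le_mul_of_nonneg_right hpow hSnonneg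
  have hlast : divVol μ β S - divVol μ β (G k) ≤ (1 / Real.exp 1) * divVol μ β S :=
    le_trans hfin hfinal
  have hGk : divVol μ β ((Finset.range k).image t) = divVol μ β (G k) := rfl
  rw [hGk]
  linarith
end

section
/- Let (Ω, 𝒮) be a measurable space, μ a measure on Ω, A, B types, and β : A × B → Set Ω with each β(h,g) measurable. Suppose β is decomposable, i.e., for all h, h' ∈ A and g, g' ∈ B: β(h,g) ∖ β(h',g) = β(h,g') ∖ β(h',g'). Then for all h, h' ∈ A and g, g' ∈ B: μ(β(h,g)) + μ(β(h',g')) = μ(β(h,g')) + μ(β(h',g)); that is, the difference μ(β(h,g)) − μ(β(h',g)) does not depend on the completion g. -/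
open MeasureTheory

/- **Statement 16.** If a ball function `β : A × B → Set Ω` is decomposable, then the
difference of measures `μ(β(h,g)) − μ(β(h',g))` does not depend on the completion `g`,
stated additively in `ℝ≥0∞`:
`μ(β(h,g)) + μ(β(h',g')) = μ(β(h,g')) + μ(β(h',g))`. -/
theorem decomposable_measure_exchange {Ω A B : Type*} [MeasurableSpace Ω]
    (μ : Measure Ω) (β : A × B → Set Ω) (hβ : ∀ p : A × B, MeasurableSet (β p))
    (hdec : ∀ (h h' : A) (g g' : B),
      β (h, g) \ β (h', g) = β (h, g') \ β (h', g'))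
    (h h' : A) (g g' : B) :
    μ (β (h, g)) + μ (β (h', g')) = μ (β (h, g')) + μ (β (h', g)) := by
  have split : ∀ (s t : Set Ω), MeasurableSet t → μ s = μ (s \ t) + μ (s ∩ t) := by
    intro s t ht
    rw [← measure_inter_add_diff s ht, add_comm]
  rw [split (β (h, g)) (β (h', g)) (hβ _), split (β (h', g')) (β (h, g')) (hβ _),
      split (β (h, g')) (β (h', g')) (hβ _), split (β (h', g)) (β (h, g)) (hβ _),
      hdec h h' g g', hdec h' h g g', Set.inter_comm (β (h', g')) (β (h, g')),
      Set.inter_comm (β (h', g)) (β (h, g))]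
  ring
end

section
/- Let (Ω, 𝒮) be a measurable space, μ a measure on Ω, A, B types, and β : A × B → Set Ω with each β(h,g) measurable. Suppose β is decomposable, i.e., for all h, h' ∈ A and g, g' ∈ B: β(h,g) ∖ β(h',g) = β(h,g') ∖ β(h',g'). Then for every fixed measurable set T ⊆ Ω and all h, h' ∈ A and g, g' ∈ B: μ(β(h,g) ∪ T) + μ(β(h',g') ∪ T) = μ(β(h,g') ∪ T) + μ(β(h',g) ∪ T). -/
open MeasureTheory

/- **Statement 17.** If a ball function `β : A × B → Set Ω` is decomposable, then for every
fixed measurable set `T` the exchange identity holds for the ranking function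
`t ↦ μ(β t ∪ T)`:
`μ(β(h,g) ∪ T) + μ(β(h',g') ∪ T) = μ(β(h,g') ∪ T) + μ(β(h',g) ∪ T)`. -/
theorem decomposable_rank_exchange {Ω A B : Type*} [MeasurableSpace Ω]
    (μ : Measure Ω) (β : A × B → Set Ω) (hβ : ∀ p : A × B, MeasurableSet (β p))
    (hdec : ∀ (h h' : A) (g g' : B),
      β (h, g) \ β (h', g) = β (h, g') \ β (h', g'))
    (T : Set Ω) (hT : MeasurableSet T)
    (h h' : A) (g g' : B) :
    μ (β (h, g) ∪ T) + μ (β (h', g') ∪ T) = μ (β (h, g') ∪ T) + μ (β (h', g) ∪ T) := by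
  -- Step 1: μ (X ∪ T) = μ T + μ (X \ T)
  have key : ∀ X : Set Ω, MeasurableSet X → μ (X ∪ T) = μ T + μ (X \ T) := by
    intro X hX
    have hdisj : Disjoint T (X \ T) := disjoint_sdiff_self_right
    have : T ∪ (X \ T) = X ∪ T := by
      rw [Set.union_diff_self, Set.union_comm]
    rw [← this, measure_union hdisj (hX.diff hT)]
  rw [key _ (hβ _), key _ (hβ _), key _ (hβ _), key _ (hβ _)]
  -- Step 2: decomposability is preserved by \ T
  have sdiff_eq : ∀ x y : Set Ω, (x \ T) \ (y \ T) = (x \ y) \ T := by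
    intro x y
    ext ω
    simp only [Set.mem_diff]
    tauto
  set γ : A × B → Set Ω := fun p => β p \ T with hγ
  have hγm : ∀ p : A × B, MeasurableSet (γ p) := fun p => (hβ p).diff hT
  have hγdec : ∀ (a a' : A) (b b' : B),
      γ (a, b) \ γ (a', b) = γ (a, b') \ γ (a', b') := by
    intro a a' b b'
    simp only [hγ, sdiff_eq, hdec a a' b b']
  -- Step 3: core exchange identity for γ
  have e1 : μ (γ (h, g) ∩ γ (h', g)) + μ (γ (h, g) \ γ (h', g)) = μ (γ (h, g)) :=
    measure_inter_add_diff _ (hγm _)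
  have e2 : μ (γ (h', g') ∩ γ (h, g')) + μ (γ (h', g') \ γ (h, g')) = μ (γ (h', g')) :=
    measure_inter_add_diff _ (hγm _)
  have e3 : μ (γ (h, g') ∩ γ (h', g')) + μ (γ (h, g') \ γ (h', g')) = μ (γ (h, g')) :=
    measure_inter_add_diff _ (hγm _)
  have e4 : μ (γ (h', g) ∩ γ (h, g)) + μ (γ (h', g) \ γ (h, g)) = μ (γ (h', g)) :=
    measure_inter_add_diff _ (hγm _)
  have d1 : γ (h, g) \ γ (h', g) = γ (h, g') \ γ (h', g') := hγdec h h' g g'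
  have d2 : γ (h', g') \ γ (h, g') = γ (h', g) \ γ (h, g) := (hγdec h' h g g').symm
  have i1 : γ (h, g) ∩ γ (h', g) = γ (h', g) ∩ γ (h, g) := Set.inter_comm _ _
  have i2 : γ (h', g') ∩ γ (h, g') = γ (h, g') ∩ γ (h', g') := Set.inter_comm _ _
  rw [← e1, ← e2, ← e3, ← e4, d1, d2, i1, i2]
  ring
end
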